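/- Let G be a finite simple graph containing vertices a, b, c, d such that a is adjacent to each of b, c, d; if b, c, d are pairwise non-adjacent then G|_{{a,b,c,d}} is a claw, and if exactly two pairs among {b,c},{b,d},{c,d} are edges then G|_{{a,b,c,d}} is a diamond. Conversely, if G has no induced claw and no induced diamond, then the neighborhood of every vertex of G induces a disjoint union of at most two complete graphs. -/

import Mathlib

open SimpleGraph

def diamondGraph : SimpleGraph (Fin 4) := (completeGraph (Fin 4)).deleteEdges {s(2,3)}

def clawGraph : SimpleGraph (Fin 4) := SimpleGraph.fromEdgeSet {s(0,1), s(0,2), s(0,3)}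

lemma clawAdj (i j : Fin 4) : clawGraph.Adj i j ↔
    ((i = 0 ∧ j ≠ 0) ∨ (j = 0 ∧ i ≠ 0)) := by
  fin_cases i <;> fin_cases j <;>
    simp [clawGraph, Sym2.eq, Sym2.rel_iff']

lemma diamondAdj (i j : Fin 4) : diamondGraph.Adj i j ↔
    (i ≠ j ∧ ¬(i = 2 ∧ j = 3) ∧ ¬(i = 3 ∧ j = 2)) := by
  fin_cases i <;> fin_cases j <;>
    simp [diamondGraph, Sym2.eq, Sym2.rel_iff']

lemma isoOfFour {V : Type*} (G : SimpleGraph V) (H : SimpleGraph (Fin 4)) (p : Fin 4 → V)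
    (hinj : Function.Injective p)
    (hadj : ∀ i j, H.Adj i j ↔ G.Adj (p i) (p j)) :
    Nonempty (G.induce (Set.range p) ≃g H) := by
  have hbij : Function.Bijective (fun i => (⟨p i, ⟨i, rfl⟩⟩ : ↥(Set.range p))) := by
    constructor
    · intro i j h
      exact hinj (congrArg Subtype.val h)
    · rintro ⟨x, i, rfl⟩
      exact ⟨i, rfl⟩
  exact ⟨(RelIso.mk (Equiv.ofBijective _ hbij) (by
    intro i j
    simp only [Equiv.ofBijective_apply]
    change G.Adj (p i) (p j) ↔ H.Adj i j
    exact (hadj i j).symm)).symm⟩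

lemma range4 {V : Type*} (a b c d : V) : Set.range ![a,b,c,d] = {a,b,c,d} := by
  ext x
  simp [Fin.exists_fin_succ]
  tauto

lemma inj4 {V : Type*} {a b c d : V} (hab : a ≠ b) (hac : a ≠ c) (had : a ≠ d)
    (hbc : b ≠ c) (hbd : b ≠ d) (hcd : c ≠ d) : Function.Injective ![a,b,c,d] := by
  intro i j h
  fin_cases i <;> fin_cases j <;> simp_all <;>
    first
      | rfl
      | exact absurd h hab | exact absurd h hac | exact absurd h had
      | exact absurd h hbc | exact absurd h hbd | exact absurd h hcd
      | exact absurd h.symm hab | exact absurd h.symm hac | exact absurd h.symm had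
      | exact absurd h.symm hbc | exact absurd h.symm hbd | exact absurd h.symm hcd

theorem stmt13 {V : Type*} [Fintype V] (G : SimpleGraph V) :
    (∀ a b c d : V, G.Adj a b → G.Adj a c → G.Adj a d →
      b ≠ c → b ≠ d → c ≠ d →
      ((¬ G.Adj b c ∧ ¬ G.Adj b d ∧ ¬ G.Adj c d →
        Nonempty (G.induce {a, b, c, d} ≃g clawGraph)) ∧
       ((G.Adj b c ∧ G.Adj b d ∧ ¬ G.Adj c d) ∨
        (G.Adj b c ∧ G.Adj c d ∧ ¬ G.Adj b d) ∨
        (G.Adj b d ∧ G.Adj c d ∧ ¬ G.Adj b c) →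
        Nonempty (G.induce {a, b, c, d} ≃g diamondGraph)))) ∧
    ((∀ I : Set V, ¬ Nonempty (G.induce I ≃g clawGraph)) →
     (∀ I : Set V, ¬ Nonempty (G.induce I ≃g diamondGraph)) →
     ∀ v : V, ∃ A B : Set V,
       A ∪ B = G.neighborSet v ∧ A ∩ B = ∅ ∧
       (∀ x ∈ A, ∀ y ∈ A, x ≠ y → G.Adj x y) ∧
       (∀ x ∈ B, ∀ y ∈ B, x ≠ y → G.Adj x y) ∧
       (∀ x ∈ A, ∀ y ∈ B, ¬ G.Adj x y)) := by
  constructor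
  · intro a b c d hab hac had hbc hbd hcd
    have hanb := G.ne_of_adj hab
    have hanc := G.ne_of_adj hac
    have hand := G.ne_of_adj had
    constructor
    · rintro ⟨h1, h2, h3⟩
      rw [← range4]
      exact isoOfFour G clawGraph ![a,b,c,d] (inj4 hanb hanc hand hbc hbd hcd) (by
        intro i j
        fin_cases i <;> fin_cases j <;>
          simp [clawAdj, hab, hac, had, hab.symm, hac.symm, had.symm, h1, h2, h3,
            fun h => h1 (G.adj_symm h), fun h => h2 (G.adj_symm h), fun h => h3 (G.adj_symm h)] <;>
          first
            | exact fun h => h1 h.symm | exact fun h => h2 h.symm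
            | exact fun h => h3 h.symm)
    · rintro (⟨h1, h2, h3⟩ | ⟨h1, h2, h3⟩ | ⟨h1, h2, h3⟩)
      · have : ({a,b,c,d} : Set V) = Set.range ![a,b,c,d] := (range4 a b c d).symm
        rw [this]
        exact isoOfFour G diamondGraph ![a,b,c,d]
          (inj4 hanb hanc hand hbc hbd hcd) (by
          intro i j
          fin_cases i <;> fin_cases j <;>
            simp [diamondAdj, hab, hac, had, hab.symm, hac.symm, had.symm, h1, h2, h3,
              h1.symm, h2.symm, fun h => h3 (G.adj_symm h)] <;>
            exact fun h => h3 h.symm)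
      · have : ({a,b,c,d} : Set V) = Set.range ![a,c,b,d] := by
          rw [range4]; ext x; simp; tauto
        rw [this]
        exact isoOfFour G diamondGraph ![a,c,b,d]
          (inj4 hanc hanb hand (Ne.symm hbc) hcd hbd) (by
          intro i j
          fin_cases i <;> fin_cases j <;>
            simp [diamondAdj, hab, hac, had, hab.symm, hac.symm, had.symm, h1, h2, h3,
              h1.symm, h2.symm, fun h => h3 (G.adj_symm h)] <;>
            exact fun h => h3 h.symm)
      · have : ({a,b,c,d} : Set V) = Set.range ![a,d,b,c] := by
          rw [range4]; ext x; simp; tauto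
        rw [this]
        exact isoOfFour G diamondGraph ![a,d,b,c]
          (inj4 hand hanb hanc (Ne.symm hbd) (Ne.symm hcd) hbc) (by
          intro i j
          fin_cases i <;> fin_cases j <;>
            simp [diamondAdj, hab, hac, had, hab.symm, hac.symm, had.symm, h1, h2, h3,
              h1.symm, h2.symm, fun h => h3 (G.adj_symm h)] <;>
            exact fun h => h3 h.symm)
  · intro hclaw hdiamond v
    classical
    -- key transitivity from diamond-freeness
    have key : ∀ x y z : V, G.Adj v x → G.Adj v y → G.Adj v z →
        G.Adj x y → G.Adj y z → x ≠ z → G.Adj x z := by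
      intro x y z hvx hvy hvz hxy hyz hxz
      by_contra hnxz
      apply hdiamond (Set.range ![v,y,x,z])
      exact isoOfFour G diamondGraph ![v,y,x,z]
        (inj4 (G.ne_of_adj hvy) (G.ne_of_adj hvx) (G.ne_of_adj hvz)
          (Ne.symm (G.ne_of_adj hxy)) (G.ne_of_adj hyz) hxz) (by
        intro i j
        fin_cases i <;> fin_cases j <;>
          simp [diamondAdj, hvx, hvy, hvz, hvx.symm, hvy.symm, hvz.symm,
            hxy, hxy.symm, hyz, hyz.symm, hnxz, fun h => hnxz (G.adj_symm h)] <;>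
          exact fun h => hnxz h.symm)
    have clawfree : ∀ x y z : V, G.Adj v x → G.Adj v y → G.Adj v z →
        x ≠ y → x ≠ z → y ≠ z → ¬ G.Adj x y → ¬ G.Adj x z → ¬ G.Adj y z → False := by
      intro x y z hvx hvy hvz hxy hxz hyz h1 h2 h3
      apply hclaw (Set.range ![v,x,y,z])
      exact isoOfFour G clawGraph ![v,x,y,z]
        (inj4 (G.ne_of_adj hvx) (G.ne_of_adj hvy) (G.ne_of_adj hvz) hxy hxz hyz) (by
        intro i j
        fin_cases i <;> fin_cases j <;>
          simp [clawAdj, hvx, hvy, hvz, hvx.symm, hvy.symm, hvz.symm, h1, h2, h3,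
            fun h => h1 (G.adj_symm h), fun h => h2 (G.adj_symm h), fun h => h3 (G.adj_symm h)] <;>
          first
            | exact fun h => h1 h.symm | exact fun h => h2 h.symm
            | exact fun h => h3 h.symm)
    by_cases hne : (G.neighborSet v).Nonempty
    · obtain ⟨x0, hx0⟩ := hne
      rw [mem_neighborSet] at hx0
      refine ⟨{x | G.Adj v x ∧ (x = x0 ∨ G.Adj x0 x)},
              {x | G.Adj v x ∧ ¬(x = x0 ∨ G.Adj x0 x)}, ?_, ?_, ?_, ?_, ?_⟩
      · ext x; simp [mem_neighborSet]; tauto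
      · ext x; simp; tauto
      · rintro x ⟨hvx, hx⟩ y ⟨hvy, hy⟩ hxy
        rcases hx with rfl | hx
        · rcases hy with rfl | hy
          · exact absurd rfl hxy
          · exact hy
        · rcases hy with rfl | hy
          · exact hx.symm
          · exact key x x0 y hvx hx0 hvy hx.symm hy hxy
      · rintro x ⟨hvx, hx⟩ y ⟨hvy, hy⟩ hxy
        push_neg at hx hy
        by_contra hnxy
        exact clawfree x0 x y hx0 hvx hvy (Ne.symm hx.1) (Ne.symm hy.1)
          hxy hx.2 hy.2 hnxy
      · rintro x ⟨hvx, hx⟩ y ⟨hvy, hy⟩ hxy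
        push_neg at hy
        rcases hx with rfl | hx
        · exact hy.2 hxy
        · exact hy.2 (key x0 x y hx0 hvx hvy hx hxy (Ne.symm hy.1))
    · refine ⟨∅, ∅, ?_, by simp, by simp, by simp, by simp⟩
      simp [Set.not_nonempty_iff_eq_empty.mp hne]
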